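/- For any dynamical system (X,T), the Lyapunov numbers satisfy 𝕃_{m,d} ≤ 2·𝕃̄_{m,r}. -/

import Mathlib

open Filter Topology Set Metric

section Defs

variable {X : Type*}

/-- A set is "opene" if it is open and nonempty. -/
def Opene [TopologicalSpace X] (U : Set X) : Prop := IsOpen U ∧ U.Nonempty

/-- `N_T(U,V) = {n ∈ ℕ : U ∩ T⁻ⁿV ≠ ∅}`. -/
def NTset (T : X → X) (U V : Set X) : Set ℕ := {n | (U ∩ T^[n] ⁻¹' V).Nonempty}

/-- `N_T(x,G) = {n ∈ ℕ : Tⁿx ∈ G}`. -/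
def NTpt (T : X → X) (x : X) (G : Set X) : Set ℕ := {n | T^[n] x ∈ G}

/-- `ω_{N_T}(x)`. -/
def omegaNT [TopologicalSpace X] (T : X → X) (x : X) : Set X :=
  {z | ∀ G : Set X, IsOpen G → z ∈ G → ∀ U V : Set X, Opene U → Opene V →
    (NTpt T x G ∩ NTset T U V).Nonempty}

/-- The ω-limit set `ω_T(x)`. -/
def omegaT [TopologicalSpace X] (T : X → X) (x : X) : Set X :=
  {z | ∀ G : Set X, IsOpen G → z ∈ G → (NTpt T x G).Infinite}

/-- Transitive compact system. -/
def TransCompact [TopologicalSpace X] (T : X → X) : Prop :=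
  ∀ x : X, (omegaNT T x).Nonempty

/-- Topologically transitive system. -/
def TopTransitive [TopologicalSpace X] (T : X → X) : Prop :=
  ∀ U V : Set X, Opene U → Opene V → (NTset T U V).Nonempty

/-- Weakly mixing: the product system `(X×X, T×T)` is topologically transitive. -/
def WeaklyMixing [TopologicalSpace X] (T : X → X) : Prop :=
  TopTransitive (fun p : X × X => (T p.1, T p.2))

/-- Totally transitive: `(X, T^k)` is transitive for every `k ≥ 1`. -/
def TotallyTransitive [TopologicalSpace X] (T : X → X) : Prop :=
  ∀ k : ℕ, 1 ≤ k → TopTransitive (T^[k])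

/-- Minimal system: every point has dense orbit. -/
def MinimalSystem [TopologicalSpace X] (T : X → X) : Prop :=
  ∀ x : X, Dense (Set.range fun n : ℕ => T^[n] x)

/-- A minimal subset: nonempty, closed, `T M = M`, with no proper nonempty closed invariant subset. -/
def IsMinimalSubset [TopologicalSpace X] (T : X → X) (M : Set X) : Prop :=
  M.Nonempty ∧ IsClosed M ∧ T '' M = M ∧
    ∀ M' : Set X, M' ⊆ M → M'.Nonempty → IsClosed M' → T '' M' = M' → M' = M

/-- A minimal point: one that lies in some minimal subset. -/
def IsMinimalPoint [TopologicalSpace X] (T : X → X) (x : X) : Prop :=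
  ∃ M : Set X, IsMinimalSubset T M ∧ x ∈ M

/-- An M-system: transitive with a dense set of minimal points. -/
def MSystem [TopologicalSpace X] (T : X → X) : Prop :=
  TopTransitive T ∧ Dense {x : X | IsMinimalPoint T x}

/-- Thick subset of ℕ. -/
def ThickSet (S : Set ℕ) : Prop := ∀ N : ℕ, ∃ m : ℕ, ∀ i ≤ N, m + i ∈ S

/-- Syndetic subset of ℕ. -/
def SyndeticSet (S : Set ℕ) : Prop := ∃ N : ℕ, ∀ i : ℕ, ∃ j ≤ N, i + j ∈ S

/-- Thickly syndetic subset of ℕ. -/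
def ThicklySyndeticSet (S : Set ℕ) : Prop :=
  ∀ N : ℕ, SyndeticSet {m : ℕ | ∀ i ≤ N, m + i ∈ S}

/-- `S_T(U,δ)`. -/
def STset [MetricSpace X] (T : X → X) (U : Set X) (δ : ℝ) : Set ℕ :=
  {n | ∃ x ∈ U, ∃ y ∈ U, δ < dist (T^[n] x) (T^[n] y)}

/-- Thickly sensitive system. -/
def ThicklySensitive [MetricSpace X] (T : X → X) : Prop :=
  ∃ δ : ℝ, 0 < δ ∧ ∀ U : Set X, Opene U → ThickSet (STset T U δ)

/-- Thickly syndetically sensitive system. -/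
def ThicklySyndeticallySensitive [MetricSpace X] (T : X → X) : Prop :=
  ∃ δ : ℝ, 0 < δ ∧ ∀ U : Set X, Opene U → ThicklySyndeticSet (STset T U δ)

/-- Multi-sensitive system. -/
def MultiSensitive [MetricSpace X] (T : X → X) : Prop :=
  ∃ δ : ℝ, 0 < δ ∧ ∀ (k : ℕ) (U : Fin (k + 1) → Set X), (∀ i, Opene (U i)) →
    (⋂ i, STset T (U i) δ).Nonempty

/-- Thickly syndetically transitive system. -/
def ThicklySyndeticallyTransitive [TopologicalSpace X] (T : X → X) : Prop :=
  ∀ U V : Set X, Opene U → Opene V → ThicklySyndeticSet (NTset T U V)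

/-- A proximal pair: `liminf d(Tⁿx,Tⁿy) = 0`. -/
def ProximalPair [MetricSpace X] (T : X → X) (x y : X) : Prop :=
  liminf (fun n : ℕ => dist (T^[n] x) (T^[n] y)) atTop = 0

/-- A proximal system: every pair of points is proximal. -/
def ProximalSystem [MetricSpace X] (T : X → X) : Prop :=
  ∀ x y : X, ProximalPair T x y

/-- The proximal cell of `x`. -/
def ProxCell [MetricSpace X] (T : X → X) (x : X) : Set X :=
  {y | ProximalPair T x y}

/-- Li-Yorke sensitivity. -/
def LiYorkeSensitive [MetricSpace X] (T : X → X) : Prop :=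
  ∃ δ : ℝ, 0 < δ ∧ ∀ x : X, ∀ U ∈ 𝓝 x, ∃ y ∈ U,
    liminf (fun n : ℕ => dist (T^[n] x) (T^[n] y)) atTop = 0 ∧
    δ < limsup (fun n : ℕ => dist (T^[n] x) (T^[n] y)) atTop

/-- Spatio-temporally chaotic system. -/
def SpatioTemporallyChaotic [MetricSpace X] (T : X → X) : Prop :=
  ∀ x : X, ∀ U ∈ 𝓝 x, ∃ y ∈ U,
    liminf (fun n : ℕ => dist (T^[n] x) (T^[n] y)) atTop = 0 ∧
    0 < limsup (fun n : ℕ => dist (T^[n] x) (T^[n] y)) atTop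

/-- A distal point: not proximal to any other point of its orbit closure. -/
def IsDistalPoint [MetricSpace X] (T : X → X) (x : X) : Prop :=
  ∀ y ∈ closure (Set.range fun n : ℕ => T^[n] x), y ≠ x →
    0 < liminf (fun n : ℕ => dist (T^[n] x) (T^[n] y)) atTop

/-- The Lyapunov number `𝕃_r`. -/
noncomputable def LyapR [MetricSpace X] (T : X → X) : ℝ :=
  sSup {δ : ℝ | 0 < δ ∧ ∀ x : X, ∀ U : Set X, IsOpen U → x ∈ U →
    ∃ y ∈ U, ∃ n : ℕ, δ < dist (T^[n] x) (T^[n] y)}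

/-- The Lyapunov number `𝕃̄_r`. -/
noncomputable def LyapRbar [MetricSpace X] (T : X → X) : ℝ :=
  sSup {δ : ℝ | 0 < δ ∧ ∀ x : X, ∀ U : Set X, IsOpen U → x ∈ U →
    ∃ y ∈ U, δ < limsup (fun n : ℕ => dist (T^[n] x) (T^[n] y)) atTop}

/-- `min_{1≤i≤k} d(Tⁿ xᵢ, Tⁿ yᵢ)`. -/
noncomputable def minDist [MetricSpace X] (T : X → X) {k : ℕ}
    (x y : Fin (k + 1) → X) (n : ℕ) : ℝ :=
  Finset.univ.inf' Finset.univ_nonempty (fun i => dist (T^[n] (x i)) (T^[n] (y i)))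

/-- The Lyapunov number `𝕃_{m,r}`. -/
noncomputable def LyapMR [MetricSpace X] (T : X → X) : ℝ :=
  sSup {δ : ℝ | 0 < δ ∧ ∀ (k : ℕ) (x : Fin (k + 1) → X) (U : Fin (k + 1) → Set X),
    (∀ i, IsOpen (U i) ∧ x i ∈ U i) →
    ∃ y : Fin (k + 1) → X, (∀ i, y i ∈ U i) ∧ ∃ n : ℕ, δ < minDist T x y n}

/-- The Lyapunov number `𝕃̄_{m,r}`. -/
noncomputable def LyapMRbar [MetricSpace X] (T : X → X) : ℝ :=
  sSup {δ : ℝ | 0 < δ ∧ ∀ (k : ℕ) (x : Fin (k + 1) → X) (U : Fin (k + 1) → Set X),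
    (∀ i, IsOpen (U i) ∧ x i ∈ U i) →
    ∃ y : Fin (k + 1) → X, (∀ i, y i ∈ U i) ∧
      δ < limsup (fun n : ℕ => minDist T x y n) atTop}

/-- The Lyapunov number `𝕃_{m,d}`. -/
noncomputable def LyapMD [MetricSpace X] (T : X → X) : ℝ :=
  sSup {δ : ℝ | 0 < δ ∧ ∀ (k : ℕ) (U : Fin (k + 1) → Set X), (∀ i, Opene (U i)) →
    ∃ x y : Fin (k + 1) → X, (∀ i, x i ∈ U i ∧ y i ∈ U i) ∧ ∃ n : ℕ, δ < minDist T x y n}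

/-- The Lyapunov number `𝕃̄_{m,d}`. -/
noncomputable def LyapMDbar [MetricSpace X] (T : X → X) : ℝ :=
  sSup {δ : ℝ | 0 < δ ∧ ∀ (k : ℕ) (U : Fin (k + 1) → Set X), (∀ i, Opene (U i)) →
    ∃ x y : Fin (k + 1) → X, (∀ i, x i ∈ U i ∧ y i ∈ U i) ∧
      δ < limsup (fun n : ℕ => minDist T x y n) atTop}

/-- `(k,T,ε)`-separated set with respect to the sequence `ns` (with `ns 0 = 0` by convention). -/
def IsSepSet [MetricSpace X] (T : X → X) (ns : ℕ → ℕ) (k : ℕ) (ε : ℝ) (E : Set X) : Prop :=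
  ∀ x ∈ E, ∀ y ∈ E, x ≠ y → ∃ j < k, ε < dist (T^[ns j] x) (T^[ns j] y)

/-- `sep(k,T,ε)`: maximal cardinality of a `(k,T,ε)`-separated set. -/
noncomputable def sepNum [MetricSpace X] (T : X → X) (ns : ℕ → ℕ) (k : ℕ) (ε : ℝ) : ℕ :=
  sSup {r : ℕ | ∃ E : Finset X, IsSepSet T ns k ε ↑E ∧ E.card = r}

/-- Topological sequence entropy along `ns`:
`h_N(T) = lim_{ε→0} limsup_{k→∞} (1/k) log sep(k,T,ε)` (the limit as `ε → 0⁺` of the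
nonincreasing-in-`ε` quantity, i.e. the supremum over `ε > 0`). -/
noncomputable def seqEntropy [MetricSpace X] (T : X → X) (ns : ℕ → ℕ) : EReal :=
  ⨆ (ε : ℝ) (_ : 0 < ε),
    limsup (fun k : ℕ => ((Real.log (sepNum T ns k ε) / k : ℝ) : EReal)) atTop

end Defs

/-!
If every family of opene sets `U₀, …, U_k` contains pairs `xᵢ, yᵢ ∈ Uᵢ` that are simultaneously
`δ`-apart at some time `n`, then, by the triangle inequality, for given points `aᵢ` one of `xᵢ, yᵢ`
is `δ/2`-apart from `aᵢ` at time `n`. By continuity of finitely many iterates, such times can be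
taken arbitrarily late. Hence for each `N` the points `y` of `X^{k+1}` that are `δ/2`-apart from `a`
(in every coordinate) at some time `n ≥ N` form an open dense set, and by Baire's theorem some `y`
close to `a` lies in all of them, so `limsup_n min_i d(Tⁿaᵢ, Tⁿyᵢ) ≥ δ/2`; thus every `δ`
admissible for `𝕃_{m,d}` gives `𝕃̄_{m,r} ≥ δ/2`.
-/

section Lyapunov

variable {X : Type*} [MetricSpace X] {T : X → X}

/-- The condition on `δ` in the definition of `LyapMD`, for families of `k + 1` sets. -/
def DiamSensitiveAt (T : X → X) (k : ℕ) (δ : ℝ) : Prop :=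
  ∀ U : Fin (k + 1) → Set X, (∀ i, Opene (U i)) →
    ∃ x y : Fin (k + 1) → X, (∀ i, x i ∈ U i ∧ y i ∈ U i) ∧ ∃ n : ℕ, δ < minDist T x y n

lemma lt_minDist_iff {k : ℕ} {x y : Fin (k + 1) → X} {n : ℕ} {δ : ℝ} :
    δ < minDist T x y n ↔ ∀ i, δ < dist (T^[n] (x i)) (T^[n] (y i)) := by
  simp [minDist, Finset.lt_inf'_iff]

lemma minDist_le_dist {k : ℕ} (x y : Fin (k + 1) → X) (n : ℕ) (i : Fin (k + 1)) :
    minDist T x y n ≤ dist (T^[n] (x i)) (T^[n] (y i)) :=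
  Finset.inf'_le _ (Finset.mem_univ i)

lemma minDist_nonneg {k : ℕ} (x y : Fin (k + 1) → X) (n : ℕ) : 0 ≤ minDist T x y n :=
  Finset.le_inf' _ _ fun _ _ => dist_nonneg

lemma minDist_le_diam [CompactSpace X] {k : ℕ} (x y : Fin (k + 1) → X) (n : ℕ) :
    minDist T x y n ≤ diam (univ : Set X) :=
  (minDist_le_dist x y n 0).trans
    (dist_le_diam_of_mem isCompact_univ.isBounded (mem_univ _) (mem_univ _))

lemma continuous_minDist (hT : Continuous T) {k : ℕ} (a : Fin (k + 1) → X) (n : ℕ) :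
    Continuous fun y => minDist T a y n :=
  Continuous.finset_inf'_apply _ fun i _ =>
    continuous_const.dist ((hT.iterate n).comp (continuous_apply i))

lemma half_lt_dist_or_half_lt_dist {δ : ℝ} {p q : X} (h : δ < dist p q) (a : X) :
    δ / 2 < dist a p ∨ δ / 2 < dist a q := by
  by_contra! hle
  linarith [dist_triangle_left p q a]

lemma eventually_forall_dist_iterate_lt (hT : Continuous T) (N : ℕ) {ε : ℝ} (hε : 0 < ε)
    (p : X) : ∀ᶠ w in 𝓝 p, ∀ j < N, dist (T^[j] w) (T^[j] p) < ε :=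
  (eventually_all_finite (finite_Iio N)).2 fun j _ =>
    Metric.tendsto_nhds.1 ((hT.iterate j).tendsto p) ε hε

lemma DiamSensitiveAt.exists_late (hT : Continuous T) {k : ℕ} {δ : ℝ} (hδ : 0 < δ)
    (H : DiamSensitiveAt T k δ) {U : Fin (k + 1) → Set X} (hU : ∀ i, Opene (U i)) (N : ℕ) :
    ∃ x y : Fin (k + 1) → X, (∀ i, x i ∈ U i ∧ y i ∈ U i) ∧
      ∃ n, N ≤ n ∧ δ < minDist T x y n := by
  choose p hp using fun i => (hU i).2
  choose W hW hWo hpW using fun i =>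
    _root_.mem_nhds_iff.1 (eventually_forall_dist_iterate_lt hT N (half_pos hδ) (p i))
  obtain ⟨x, y, hxy, n, hn⟩ :=
    H (fun i => U i ∩ W i) fun i => ⟨(hU i).1.inter (hWo i), p i, hp i, hpW i⟩
  refine ⟨x, y, fun i => ⟨(hxy i).1.1, (hxy i).2.1⟩, n, not_lt.1 fun hnN => ?_, hn⟩
  -- before time `N`, points of `W 0` stay `δ/2`-close to `T^[n] (p 0)`
  have hx := hW 0 (hxy 0).1.2 n hnN
  have hy := hW 0 (hxy 0).2.2 n hnN
  linarith [minDist_le_dist (T := T) x y n 0, dist_triangle_right (T^[n] (x 0)) (T^[n] (y 0))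
    (T^[n] (p 0))]

lemma isOpen_setOf_exists_ge_lt_minDist (hT : Continuous T) {k : ℕ} (a : Fin (k + 1) → X)
    (N : ℕ) (ε : ℝ) : IsOpen {y | ∃ n, N ≤ n ∧ ε < minDist T a y n} := by
  have h : IsOpen (⋃ n ≥ N, {y | ε < minDist T a y n}) :=
    isOpen_biUnion fun n _ => isOpen_lt continuous_const (continuous_minDist hT a n)
  convert h using 1
  ext y
  simp

lemma DiamSensitiveAt.dense_setOf_exists_ge_half_lt_minDist (hT : Continuous T) {k : ℕ}
    {δ : ℝ} (hδ : 0 < δ) (H : DiamSensitiveAt T k δ) (a : Fin (k + 1) → X) (N : ℕ) :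
    Dense {y | ∃ n, N ≤ n ∧ δ / 2 < minDist T a y n} := by
  refine dense_iff_inter_open.2 fun O hO ⟨b, hb⟩ => ?_
  obtain ⟨V, hV, hVO⟩ := isOpen_pi_iff'.1 hO b hb
  obtain ⟨x, y, hxy, n, hNn, hn⟩ :=
    H.exists_late hT hδ (fun i => ⟨(hV i).1, b i, (hV i).2⟩) N
  have hfar : ∀ i, ∃ z ∈ V i, δ / 2 < dist (T^[n] (a i)) (T^[n] z) := fun i =>
    (half_lt_dist_or_half_lt_dist (lt_minDist_iff.1 hn i) _).elim
      (fun h => ⟨x i, (hxy i).1, h⟩) (fun h => ⟨y i, (hxy i).2, h⟩)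
  choose z hzV hz using hfar
  exact ⟨z, hVO fun i _ => hzV i, n, hNn, lt_minDist_iff.2 hz⟩

lemma DiamSensitiveAt.exists_frequently_half_lt_minDist [CompactSpace X] (hT : Continuous T)
    {k : ℕ} {δ : ℝ} (hδ : 0 < δ) (H : DiamSensitiveAt T k δ) (a : Fin (k + 1) → X)
    {U : Fin (k + 1) → Set X} (hU : ∀ i, IsOpen (U i) ∧ a i ∈ U i) :
    ∃ y : Fin (k + 1) → X, (∀ i, y i ∈ U i) ∧ ∃ᶠ n in atTop, δ / 2 < minDist T a y n := by
  have hG : Dense (⋂ N, {y | ∃ n, N ≤ n ∧ δ / 2 < minDist T a y n}) :=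
    dense_iInter_of_isOpen_nat (fun N => isOpen_setOf_exists_ge_lt_minDist hT a N _)
      (H.dense_setOf_exists_ge_half_lt_minDist hT hδ a)
  obtain ⟨y, hyU, hyG⟩ := hG.inter_open_nonempty (univ.pi U)
    (isOpen_set_pi finite_univ fun i _ => (hU i).1) ⟨a, fun i _ => (hU i).2⟩
  exact ⟨y, fun i => hyU i (mem_univ i), frequently_atTop.2 (mem_iInter.1 hyG)⟩

lemma lyapMRbar_nonneg : 0 ≤ LyapMRbar T :=
  Real.sSup_nonneg fun _ h => h.1.le

lemma le_lyapMRbar [CompactSpace X] [Nonempty X] {δ : ℝ} (hδ : 0 < δ)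
    (h : ∀ (k : ℕ) (x : Fin (k + 1) → X) (U : Fin (k + 1) → Set X),
      (∀ i, IsOpen (U i) ∧ x i ∈ U i) →
      ∃ y : Fin (k + 1) → X, (∀ i, y i ∈ U i) ∧
        δ < limsup (fun n : ℕ => minDist T x y n) atTop) :
    δ ≤ LyapMRbar T := by
  refine le_csSup ⟨diam (univ : Set X), fun ε ⟨_, hε⟩ => ?_⟩ ⟨hδ, h⟩
  obtain ⟨x₀⟩ := ‹Nonempty X›
  obtain ⟨y, -, hy⟩ := hε 0 (fun _ => x₀) (fun _ => univ) fun _ => ⟨isOpen_univ, mem_univ _⟩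
  refine hy.le.trans (limsup_le_of_le ?_ (Eventually.of_forall fun n => minDist_le_diam _ y n))
  exact isBoundedUnder_of ⟨0, fun n => minDist_nonneg _ y n⟩ |>.isCoboundedUnder_le

lemma half_le_lyapMRbar [CompactSpace X] [Nonempty X] (hT : Continuous T) {δ : ℝ}
    (hδ : 0 < δ) (H : ∀ k, DiamSensitiveAt T k δ) : δ / 2 ≤ LyapMRbar T := by
  refine le_of_forall_lt_imp_le_of_dense fun ε hε => ?_
  rcases le_or_gt ε 0 with hε0 | hε0
  · exact hε0.trans lyapMRbar_nonneg
  refine le_lyapMRbar hε0 fun k a U hU => ?_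
  obtain ⟨y, hyU, hy⟩ := (H k).exists_frequently_half_lt_minDist hT hδ a hU
  refine ⟨y, hyU, hε.trans_le (le_limsup_of_frequently_le (hy.mono fun _ => le_of_lt) ?_)⟩
  exact isBoundedUnder_of ⟨_, fun n => minDist_le_diam a y n⟩

end Lyapunov

theorem stmt19_general {X : Type*} [MetricSpace X] [CompactSpace X] [Nontrivial X]
    {T : X → X} (hTc : Continuous T) :
    LyapMD T ≤ 2 * LyapMRbar T := by
  refine Real.sSup_le (fun δ ⟨hδ, H⟩ => ?_) (mul_nonneg zero_le_two lyapMRbar_nonneg)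
  linarith [half_le_lyapMRbar hTc hδ H]

/-- For any dynamical system, `𝕃_{m,d} ≤ 2 𝕃̄_{m,r}`. -/
theorem stmt19 {X : Type*} [MetricSpace X] [CompactSpace X] [Nontrivial X]
    (hperf : ∀ x : X, (𝓝[≠] x).NeBot)
    {T : X → X} (hTc : Continuous T) (hTs : Function.Surjective T) :
    LyapMD T ≤ 2 * LyapMRbar T :=
  stmt19_general hTc
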